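/- Let N ≥ 2 and let (X_i, Y_i), i = 1,…,N, be independent pairs of Σ-valued random variables, each pair distributed according to the joint probability mass function p. If X and Y are independent under p, i.e. p(x,y) = p_A(x)·p_B(y) for all x, y, then for any functions f, g : Σ → Σ applied to the signals, E[MIG^Corr(f ∘ X, g ∘ Y)] = 0; i.e., when the two agents' signals are uninformative about each other, every (deterministic) strategy profile yields zero expected Correlation-PP payment. -/
import Mathlib


open Finset

lemma sum_pi_prod (N : ℕ) {S : Type} [Fintype S] (h : Fin N → S → ℝ) :
    ∑ ω : Fin N → S, ∏ i, h i (ω i) = ∏ i, ∑ z, h i z := by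
  rw [Finset.prod_univ_sum, Fintype.piFinset_univ]

lemma indic_split (S : Type) [Fintype S] [DecidableEq S] (u v : S) :
    (if u = v then (1:ℝ) else 0)
      = ∑ a : S, (if u = a then (1:ℝ) else 0) * (if v = a then 1 else 0) := by
  rw [Finset.sum_eq_single u]
  · simp [eq_comm]
  · intro b _ hb; simp [Ne.symm hb]
  · simp

/-- The Correlation-PP payment for `N` tasks and reports `rA`, `rB`. -/
noncomputable def MIGcorr {S : Type} [DecidableEq S] (N : ℕ) (rA rB : Fin N → S) : ℝ :=
  (N : ℝ)⁻¹ * ∑ i, (if rA i = rB i then (1 : ℝ) else 0)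
    - ((N : ℝ) * ((N : ℝ) - 1))⁻¹ *
      ∑ i, ∑ j, (if i ≠ j then (if rA i = rB j then (1 : ℝ) else 0) else 0)

/-- If the two agents' signals are independent under `p`, then for any deterministic
strategies `f`, `g` applied to the signals, the expected Correlation-PP payment over
`N ≥ 2` i.i.d. pairs is zero. -/
theorem stmt_14 (S : Type) [Fintype S] [Nonempty S] [DecidableEq S]
    (p : S × S → ℝ) (hp0 : ∀ z, 0 ≤ p z) (hp1 : ∑ z : S × S, p z = 1)
    (hind : ∀ x y : S, p (x, y) = (∑ y' : S, p (x, y')) * (∑ x' : S, p (x', y)))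
    (f g : S → S) (N : ℕ) (hN : 2 ≤ N) :
    ∑ ω : Fin N → S × S, (∏ i, p (ω i)) *
        MIGcorr N (fun i => f (ω i).1) (fun i => g (ω i).2) = 0 := by
  set c : S → ℝ := fun a => ∑ z : S × S, p z * (if f z.1 = a then 1 else 0) with hc
  set d : S → ℝ := fun a => ∑ z : S × S, p z * (if g z.2 = a then 1 else 0) with hd
  set T : ℝ := ∑ a : S, c a * d a with hT
  -- off-diagonal key lemma
  have keyA : ∀ i j : Fin N, i ≠ j →
      (∑ ω : Fin N → S × S, (∏ k, p (ω k)) * (if f (ω i).1 = g (ω j).2 then 1 else 0)) = T := by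
    intro i j hij
    have step1 : ∀ ω : Fin N → S × S,
        (∏ k, p (ω k)) * (if f (ω i).1 = g (ω j).2 then 1 else 0)
          = ∑ a : S, ∏ k, (p (ω k) * (if k = i then (if f (ω k).1 = a then 1 else 0) else 1)
              * (if k = j then (if g (ω k).2 = a then 1 else 0) else 1)) := by
      intro ω
      rw [indic_split S, Finset.mul_sum]
      refine Finset.sum_congr rfl (fun a _ => ?_)
      rw [Finset.prod_mul_distrib, Finset.prod_mul_distrib,
        Finset.prod_ite_eq' Finset.univ i, Finset.prod_ite_eq' Finset.univ j]
      simp [mul_assoc]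
    simp only [step1]
    rw [Finset.sum_comm]
    have step2 : ∀ a : S,
        (∑ ω : Fin N → S × S, ∏ k, (p (ω k) * (if k = i then (if f (ω k).1 = a then 1 else 0) else 1)
            * (if k = j then (if g (ω k).2 = a then 1 else 0) else 1))) = c a * d a := by
      intro a
      rw [sum_pi_prod N (fun k z => p z * (if k = i then (if f z.1 = a then (1:ℝ) else 0) else 1)
          * (if k = j then (if g z.2 = a then 1 else 0) else 1))]
      have hfac : ∀ k : Fin N,
          (∑ z : S × S, p z * (if k = i then (if f z.1 = a then (1:ℝ) else 0) else 1)
              * (if k = j then (if g z.2 = a then 1 else 0) else 1))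
            = (if k = i then c a else 1) * (if k = j then d a else 1) := by
        intro k
        by_cases hki : k = i
        · subst hki
          have hkj : k ≠ j := hij
          simp [hkj, hc]
        · by_cases hkj : k = j
          · subst hkj
            simp [hki, hd]
          · simp [hki, hkj, hp1]
      simp only [hfac]
      rw [Finset.prod_mul_distrib, Finset.prod_ite_eq' Finset.univ i,
        Finset.prod_ite_eq' Finset.univ j]
      simp
    exact Finset.sum_congr rfl (fun a _ => step2 a)
  -- diagonal reduction to one coordinate
  have keyB : ∀ i : Fin N,
      (∑ ω : Fin N → S × S, (∏ k, p (ω k)) * (if f (ω i).1 = g (ω i).2 then 1 else 0))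
        = ∑ z : S × S, p z * (if f z.1 = g z.2 then 1 else 0) := by
    intro i
    have step1 : ∀ ω : Fin N → S × S,
        (∏ k, p (ω k)) * (if f (ω i).1 = g (ω i).2 then 1 else 0)
          = ∏ k, (p (ω k) * (if k = i then (if f (ω k).1 = g (ω k).2 then 1 else 0) else 1)) := by
      intro ω
      rw [Finset.prod_mul_distrib, Finset.prod_ite_eq' Finset.univ i]
      simp
    simp only [step1]
    rw [sum_pi_prod N (fun k z => p z * (if k = i then (if f z.1 = g z.2 then (1:ℝ) else 0) else 1))]
    have hfac : ∀ k : Fin N,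
        (∑ z : S × S, p z * (if k = i then (if f z.1 = g z.2 then (1:ℝ) else 0) else 1))
          = (if k = i then (∑ z : S × S, p z * (if f z.1 = g z.2 then (1:ℝ) else 0)) else 1) := by
      intro k
      by_cases hki : k = i
      · simp [hki]
      · simp [hki, hp1]
    simp only [hfac]
    rw [Finset.prod_ite_eq' Finset.univ i]
    simp
  -- the one-coordinate diagonal value equals T, using independence
  have keyC : (∑ z : S × S, p z * (if f z.1 = g z.2 then (1:ℝ) else 0)) = T := by
    have hca : ∀ a : S, c a = ∑ x : S, (∑ y' : S, p (x, y')) * (if f x = a then 1 else 0) := by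
      intro a
      simp only [hc]
      rw [Fintype.sum_prod_type]
      exact Finset.sum_congr rfl (fun x _ => by rw [Finset.sum_mul])
    have hda : ∀ a : S, d a = ∑ y : S, (∑ x' : S, p (x', y)) * (if g y = a then 1 else 0) := by
      intro a
      simp only [hd]
      rw [Fintype.sum_prod_type_right]
      exact Finset.sum_congr rfl (fun y _ => by rw [Finset.sum_mul])
    rw [hT]
    calc (∑ z : S × S, p z * (if f z.1 = g z.2 then (1:ℝ) else 0))
        = ∑ x : S, ∑ y : S, (∑ y' : S, p (x, y')) * (∑ x' : S, p (x', y))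
            * (if f x = g y then (1:ℝ) else 0) := by
          rw [Fintype.sum_prod_type]
          exact Finset.sum_congr rfl (fun x _ => Finset.sum_congr rfl (fun y _ => by
            rw [← hind]))
      _ = ∑ x : S, ∑ y : S, ∑ a : S,
            ((∑ y' : S, p (x, y')) * (if f x = a then (1:ℝ) else 0))
              * ((∑ x' : S, p (x', y)) * (if g y = a then 1 else 0)) := by
          refine Finset.sum_congr rfl (fun x _ => Finset.sum_congr rfl (fun y _ => ?_))
          rw [indic_split S (f x) (g y), Finset.mul_sum]
          exact Finset.sum_congr rfl (fun a _ => by ring)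
      _ = ∑ a : S, ∑ x : S, ∑ y : S,
            ((∑ y' : S, p (x, y')) * (if f x = a then (1:ℝ) else 0))
              * ((∑ x' : S, p (x', y)) * (if g y = a then 1 else 0)) := by
          refine Eq.trans (Finset.sum_congr rfl (fun x _ => Finset.sum_comm)) ?_
          exact Finset.sum_comm
      _ = ∑ a : S, c a * d a := by
          refine Finset.sum_congr rfl (fun a _ => ?_)
          rw [hca, hda, Finset.sum_mul_sum]
  have hE : ∀ i j : Fin N,
      (∑ ω : Fin N → S × S, (∏ k, p (ω k)) * (if f (ω i).1 = g (ω j).2 then 1 else 0)) = T := by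
    intro i j
    by_cases hij : i = j
    · subst hij; rw [keyB i, keyC]
    · exact keyA i j hij
  -- expansion
  have expand : ∑ ω : Fin N → S × S, (∏ i, p (ω i)) *
        MIGcorr N (fun i => f (ω i).1) (fun i => g (ω i).2)
      = (N : ℝ)⁻¹ * ∑ i : Fin N,
          (∑ ω : Fin N → S × S, (∏ k, p (ω k)) * (if f (ω i).1 = g (ω i).2 then 1 else 0))
        - ((N : ℝ) * ((N : ℝ) - 1))⁻¹ * ∑ i : Fin N, ∑ j : Fin N, (if i ≠ j then
            (∑ ω : Fin N → S × S, (∏ k, p (ω k)) * (if f (ω i).1 = g (ω j).2 then 1 else 0))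
          else 0) := by
    have h1 : ∑ ω : Fin N → S × S, (∏ k, p (ω k)) *
          (∑ i : Fin N, (if f (ω i).1 = g (ω i).2 then (1:ℝ) else 0))
        = ∑ i : Fin N, ∑ ω : Fin N → S × S,
            (∏ k, p (ω k)) * (if f (ω i).1 = g (ω i).2 then 1 else 0) := by
      simp only [Finset.mul_sum]
      exact Finset.sum_comm
    have h2 : ∑ ω : Fin N → S × S, (∏ k, p (ω k)) *
          (∑ i : Fin N, ∑ j : Fin N,
            (if i ≠ j then (if f (ω i).1 = g (ω j).2 then (1:ℝ) else 0) else 0))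
        = ∑ i : Fin N, ∑ j : Fin N, (if i ≠ j then
            (∑ ω : Fin N → S × S, (∏ k, p (ω k)) * (if f (ω i).1 = g (ω j).2 then 1 else 0))
          else 0) := by
      simp only [Finset.mul_sum]
      rw [Finset.sum_comm]
      refine Finset.sum_congr rfl (fun i _ => ?_)
      rw [Finset.sum_comm]
      refine Finset.sum_congr rfl (fun j _ => ?_)
      by_cases hij : i = j
      · simp [hij]
      · simp [hij]
    calc ∑ ω : Fin N → S × S, (∏ i, p (ω i)) *
          MIGcorr N (fun i => f (ω i).1) (fun i => g (ω i).2)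
        = ∑ ω : Fin N → S × S,
            ((N : ℝ)⁻¹ * ((∏ k, p (ω k)) *
                (∑ i : Fin N, (if f (ω i).1 = g (ω i).2 then (1:ℝ) else 0)))
              - ((N : ℝ) * ((N : ℝ) - 1))⁻¹ * ((∏ k, p (ω k)) *
                (∑ i : Fin N, ∑ j : Fin N,
                  (if i ≠ j then (if f (ω i).1 = g (ω j).2 then (1:ℝ) else 0) else 0)))) := by
          refine Finset.sum_congr rfl (fun ω _ => ?_)
          simp only [MIGcorr]
          ring
      _ = _ := by
          rw [Finset.sum_sub_distrib, ← Finset.mul_sum, ← Finset.mul_sum, h1, h2]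
  rw [expand]
  have e1 : (∑ i : Fin N, ∑ ω : Fin N → S × S,
      (∏ k, p (ω k)) * (if f (ω i).1 = g (ω i).2 then (1:ℝ) else 0)) = ∑ _i : Fin N, T :=
    Finset.sum_congr rfl (fun i _ => hE i i)
  have e2 : (∑ i : Fin N, ∑ j : Fin N, (if i ≠ j then
        (∑ ω : Fin N → S × S, (∏ k, p (ω k)) * (if f (ω i).1 = g (ω j).2 then (1:ℝ) else 0))
      else 0)) = ∑ i : Fin N, ∑ j : Fin N, (if i ≠ j then T else 0) :=
    Finset.sum_congr rfl (fun i _ => Finset.sum_congr rfl (fun j _ => by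
      by_cases hij : i = j
      · simp [hij]
      · simp only [hij, Ne, not_false_iff, if_true, hE]))
  rw [e1, e2]
  have hcard : ∀ i : Fin N, (∑ j : Fin N, if i ≠ j then T else 0) = ((N : ℝ) - 1) * T := by
    intro i
    rw [Finset.sum_ite, Finset.sum_const, Finset.sum_const, smul_zero, add_zero]
    have h1 : (Finset.univ.filter (fun j => i ≠ j)).card = N - 1 := by
      simp [Finset.filter_ne, Finset.card_erase_of_mem]
    rw [h1, nsmul_eq_mul]
    have h2 : ((N - 1 : ℕ) : ℝ) = (N : ℝ) - 1 := by
      have : 1 ≤ N := le_trans (by norm_num) hN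
      push_cast [this]
      ring
    rw [h2]
  simp only [hcard, Finset.sum_const, Finset.card_univ, Fintype.card_fin, smul_eq_mul]
  have hN0 : (N : ℝ) ≠ 0 := by positivity
  have hN1 : (N : ℝ) - 1 ≠ 0 := by
    have : (2 : ℝ) ≤ (N : ℝ) := by exact_mod_cast hN
    linarith
  field_simp
  ring
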